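/- arXiv:2005.05052 — 2 statements merged into one kernel-verified Lean document; each statement's English description precedes it below -/
import Mathlib

section
/- (Two-sided orthogonal Procrustes) If A = V_A Λ_A V_Aᵀ and B = V_B Λ_B V_Bᵀ are spectral decompositions of symmetric matrices with eigenvalues sorted in decreasing order, then for any diagonal sign matrix S = diag(±1,...,±1), the orthogonal matrix P* = V_B S V_Aᵀ satisfies ||A - P*ᵀ B P*||_F² = Σᵢ (λ_A^{(i)} - λ_B^{(i)})², and this value is a lower bound for ||A - PᵀBP||_F² over all orthogonal P. -/
open Matrix Finset

lemma perm_weight_sum {n : ℕ} (a b : Fin n → ℝ) (σ : Equiv.Perm (Fin n)) :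
    ∑ i, ∑ j, (σ.permMatrix ℝ) i j * (a i * b j) = ∑ i, a i * b (σ i) := by
  refine Finset.sum_congr rfl fun i _ => ?_
  simp [Equiv.Perm.permMatrix, PEquiv.toMatrix, Equiv.toPEquiv_apply, ite_mul,
    Finset.sum_ite_eq]

lemma ds_sum_le {n : ℕ} (a b : Fin n → ℝ)
    (ha : ∀ i j : Fin n, i ≤ j → a j ≤ a i) (hb : ∀ i j : Fin n, i ≤ j → b j ≤ b i)
    (M : Matrix (Fin n) (Fin n) ℝ) (hM : M ∈ doublyStochastic ℝ (Fin n)) :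
    ∑ i, ∑ j, M i j * (a i * b j) ≤ ∑ i, a i * b i := by
  have hmono : Monovary a b := by
    intro i j hbij
    rcases le_total i j with h | h
    · exact absurd (hb i j h) (not_le.mpr hbij)
    · exact ha j i h
  obtain ⟨w, hw0, hw1, hwM⟩ := exists_eq_sum_perm_of_mem_doublyStochastic hM
  have hM' : ∀ i j, M i j = ∑ σ : Equiv.Perm (Fin n), w σ * (σ.permMatrix ℝ) i j := by
    intro i j; rw [← hwM]; simp [Finset.sum_apply, Matrix.sum_apply]
  have key : ∑ i, ∑ j, M i j * (a i * b j)
      = ∑ σ : Equiv.Perm (Fin n), w σ * ∑ i, a i * b (σ i) := by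
    simp_rw [hM', Finset.sum_mul, mul_assoc]
    rw [Finset.sum_congr rfl fun i _ => Finset.sum_comm, Finset.sum_comm]
    refine Finset.sum_congr rfl fun σ _ => ?_
    rw [← perm_weight_sum a b σ, Finset.mul_sum]
    exact Finset.sum_congr rfl fun i _ => by rw [Finset.mul_sum]
  rw [key]
  calc ∑ σ : Equiv.Perm (Fin n), w σ * ∑ i, a i * b (σ i)
      ≤ ∑ σ : Equiv.Perm (Fin n), w σ * ∑ i, a i * b i := by
        refine Finset.sum_le_sum fun σ _ => ?_
        exact mul_le_mul_of_nonneg_left (hmono.sum_mul_comp_perm_le_sum_mul) (hw0 σ)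
    _ = ∑ i, a i * b i := by rw [← Finset.sum_mul, hw1, one_mul]

lemma trace_conj {n : ℕ} (V : Matrix (Fin n) (Fin n) ℝ) (hV : Vᵀ * V = 1)
    (D : Matrix (Fin n) (Fin n) ℝ) : Matrix.trace (V * D * Vᵀ) = Matrix.trace D := by
  rw [Matrix.trace_mul_comm (V * D) Vᵀ, ← Matrix.mul_assoc, hV, Matrix.one_mul]

lemma trace_conj_sq {n : ℕ} (V : Matrix (Fin n) (Fin n) ℝ) (hV : Vᵀ * V = 1)
    (d : Fin n → ℝ) :
    Matrix.trace ((V * Matrix.diagonal d * Vᵀ) * (V * Matrix.diagonal d * Vᵀ))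
      = ∑ i, d i ^ 2 := by
  have h1 : (V * Matrix.diagonal d * Vᵀ) * (V * Matrix.diagonal d * Vᵀ)
      = V * (Matrix.diagonal d * Matrix.diagonal d) * Vᵀ := by
    calc (V * Matrix.diagonal d * Vᵀ) * (V * Matrix.diagonal d * Vᵀ)
        = V * Matrix.diagonal d * (Vᵀ * V) * Matrix.diagonal d * Vᵀ := by
          simp only [Matrix.mul_assoc]
      _ = V * (Matrix.diagonal d * Matrix.diagonal d) * Vᵀ := by
          rw [hV]; simp only [Matrix.mul_assoc, Matrix.one_mul]
  rw [h1, trace_conj V hV, Matrix.diagonal_mul_diagonal, Matrix.trace_diagonal]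
  exact Finset.sum_congr rfl fun i _ => (sq (d i)).symm

lemma trace_dQdQ {n : ℕ} (a b : Fin n → ℝ) (Q : Matrix (Fin n) (Fin n) ℝ) :
    Matrix.trace (Matrix.diagonal a * Qᵀ * Matrix.diagonal b * Q)
      = ∑ i, ∑ j, (Q j i) ^ 2 * (a i * b j) := by
  simp only [Matrix.trace, Matrix.diag_apply, Matrix.mul_apply, Matrix.diagonal_apply,
    Matrix.transpose_apply, ite_mul, zero_mul, mul_ite, mul_zero, Finset.sum_ite_eq,
    Finset.sum_ite_eq', Finset.mem_univ, if_true]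
  refine Finset.sum_congr rfl fun i _ => ?_
  refine Finset.sum_congr rfl fun j _ => ?_
  ring


/-- Two-sided orthogonal Procrustes: with spectral decompositions
`A = V_A Λ_A V_Aᵀ`, `B = V_B Λ_B V_Bᵀ` (eigenvalues sorted decreasingly) and any
diagonal sign matrix `S`, the matrix `P* = V_B S V_Aᵀ` is orthogonal, achieves
`‖A - P*ᵀBP*‖_F² = ∑ᵢ (λ_A⁽ⁱ⁾ - λ_B⁽ⁱ⁾)²`, and this value is a lower bound for
`‖A - PᵀBP‖_F²` over all orthogonal `P`. -/
theorem two_sided_procrustes (n : ℕ) (A B VA VB : Matrix (Fin n) (Fin n) ℝ)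
    (lamA lamB : Fin n → ℝ)
    (hVA : VAᵀ * VA = 1) (hVA' : VA * VAᵀ = 1)
    (hVB : VBᵀ * VB = 1) (hVB' : VB * VBᵀ = 1)
    (hAdec : A = VA * Matrix.diagonal lamA * VAᵀ)
    (hBdec : B = VB * Matrix.diagonal lamB * VBᵀ)
    (hsortA : ∀ i j : Fin n, i ≤ j → lamA j ≤ lamA i)
    (hsortB : ∀ i j : Fin n, i ≤ j → lamB j ≤ lamB i)
    (s : Fin n → ℝ) (hs : ∀ i, s i = 1 ∨ s i = -1)
    (Pstar : Matrix (Fin n) (Fin n) ℝ)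
    (hPstar : Pstar = VB * Matrix.diagonal s * VAᵀ) :
    Pstarᵀ * Pstar = 1 ∧
      Matrix.trace ((A - Pstarᵀ * B * Pstar)ᵀ * (A - Pstarᵀ * B * Pstar)) =
        ∑ i, (lamA i - lamB i) ^ 2 ∧
      ∀ P : Matrix (Fin n) (Fin n) ℝ, Pᵀ * P = 1 →
        (∑ i, (lamA i - lamB i) ^ 2) ≤
          Matrix.trace ((A - Pᵀ * B * P)ᵀ * (A - Pᵀ * B * P)) := by
  have hs2 : Matrix.diagonal s * Matrix.diagonal s = 1 := by
    rw [Matrix.diagonal_mul_diagonal]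
    have : (fun i => s i * s i) = fun _ => (1 : ℝ) := by
      funext i; rcases hs i with h | h <;> rw [h] <;> norm_num
    rw [this, Matrix.diagonal_one]
  have hdiagB : Matrix.diagonal s * Matrix.diagonal lamB * Matrix.diagonal s
      = Matrix.diagonal lamB := by
    rw [Matrix.diagonal_mul_diagonal, Matrix.diagonal_mul_diagonal]
    have : (fun i => s i * lamB i * s i) = lamB := by
      funext i; rcases hs i with h | h <;> rw [h] <;> ring
    rw [this]
  have h1 : Pstarᵀ * Pstar = 1 := by
    calc Pstarᵀ * Pstar
        = VA * (Matrix.diagonal s * ((VBᵀ * VB) * (Matrix.diagonal s * VAᵀ))) := by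
          rw [hPstar]
          simp only [Matrix.transpose_mul, Matrix.diagonal_transpose,
            Matrix.transpose_transpose, Matrix.mul_assoc]
      _ = VA * (Matrix.diagonal s * Matrix.diagonal s) * VAᵀ := by
          rw [hVB, Matrix.one_mul]; simp only [Matrix.mul_assoc]
      _ = 1 := by rw [hs2, Matrix.mul_one, hVA']
  have hPBP : Pstarᵀ * B * Pstar = VA * Matrix.diagonal lamB * VAᵀ := by
    calc Pstarᵀ * B * Pstar
        = VA * (Matrix.diagonal s * ((VBᵀ * VB) * (Matrix.diagonal lamB *
            ((VBᵀ * VB) * (Matrix.diagonal s * VAᵀ))))) := by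
          rw [hPstar, hBdec]
          simp only [Matrix.transpose_mul, Matrix.diagonal_transpose,
            Matrix.transpose_transpose, Matrix.mul_assoc]
      _ = VA * (Matrix.diagonal s * Matrix.diagonal lamB * Matrix.diagonal s) * VAᵀ := by
          rw [hVB, Matrix.one_mul, Matrix.one_mul]; simp only [Matrix.mul_assoc]
      _ = VA * Matrix.diagonal lamB * VAᵀ := by rw [hdiagB]
  refine ⟨h1, ?_, ?_⟩
  · have hdiff : A - Pstarᵀ * B * Pstar = VA * Matrix.diagonal (fun i => lamA i - lamB i) * VAᵀ := by
      rw [hAdec, hPBP, ← Matrix.sub_mul, ← Matrix.mul_sub, Matrix.diagonal_sub]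
    have hsymm : (VA * Matrix.diagonal (fun i => lamA i - lamB i) * VAᵀ)ᵀ
        = VA * Matrix.diagonal (fun i => lamA i - lamB i) * VAᵀ := by
      simp only [Matrix.transpose_mul, Matrix.diagonal_transpose,
        Matrix.transpose_transpose, Matrix.mul_assoc]
    rw [hdiff, hsymm, trace_conj_sq VA hVA]
  · intro P hP
    have hP' : P * Pᵀ = 1 := mul_eq_one_comm.mp hP
    set Q := VBᵀ * P * VA with hQ
    have hQ1 : Qᵀ * Q = 1 := by
      calc Qᵀ * Q = VAᵀ * (Pᵀ * ((VB * VBᵀ) * (P * VA))) := by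
            rw [hQ]
            simp only [Matrix.transpose_mul, Matrix.transpose_transpose, Matrix.mul_assoc]
        _ = VAᵀ * ((Pᵀ * P) * VA) := by rw [hVB', Matrix.one_mul]; simp only [Matrix.mul_assoc]
        _ = 1 := by rw [hP, Matrix.one_mul, hVA]
    have hQ2 : Q * Qᵀ = 1 := mul_eq_one_comm.mp hQ1
    set M : Matrix (Fin n) (Fin n) ℝ := Matrix.of fun i j => (Q j i) ^ 2 with hMdef
    have hMds : M ∈ doublyStochastic ℝ (Fin n) := by
      rw [mem_doublyStochastic_iff_sum]
      refine ⟨fun i j => sq_nonneg _, fun i => ?_, fun j => ?_⟩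
      · have h := congrArg (fun X : Matrix (Fin n) (Fin n) ℝ => X i i) hQ1
        simp only [Matrix.mul_apply, Matrix.transpose_apply, Matrix.one_apply_eq] at h
        calc ∑ j, M i j = ∑ j, Q j i * Q j i := by
              refine Finset.sum_congr rfl fun j _ => by rw [hMdef]; simp [sq]
          _ = 1 := h
      · have h := congrArg (fun X : Matrix (Fin n) (Fin n) ℝ => X j j) hQ2
        simp only [Matrix.mul_apply, Matrix.transpose_apply, Matrix.one_apply_eq] at h
        calc ∑ i, M i j = ∑ i, Q j i * Q j i := by
              refine Finset.sum_congr rfl fun i _ => by rw [hMdef]; simp [sq]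
          _ = 1 := h
    have hAsym : Aᵀ = A := by
      rw [hAdec]
      simp only [Matrix.transpose_mul, Matrix.diagonal_transpose,
        Matrix.transpose_transpose, Matrix.mul_assoc]
    have hBsym : Bᵀ = B := by
      rw [hBdec]
      simp only [Matrix.transpose_mul, Matrix.diagonal_transpose,
        Matrix.transpose_transpose, Matrix.mul_assoc]
    set C := Pᵀ * B * P with hC
    have hCsym : Cᵀ = C := by
      rw [hC]
      simp only [Matrix.transpose_mul, Matrix.transpose_transpose, hBsym, Matrix.mul_assoc]
    have htrA : Matrix.trace (A * A) = ∑ i, lamA i ^ 2 := by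
      rw [hAdec]; exact trace_conj_sq VA hVA lamA
    have htrB : Matrix.trace (B * B) = ∑ i, lamB i ^ 2 := by
      rw [hBdec]; exact trace_conj_sq VB hVB lamB
    have htrC : Matrix.trace (C * C) = ∑ i, lamB i ^ 2 := by
      rw [← htrB]
      calc Matrix.trace (C * C)
          = Matrix.trace (Pᵀ * (B * ((P * Pᵀ) * (B * P)))) := by
            rw [hC]; simp only [Matrix.mul_assoc]
        _ = Matrix.trace (Pᵀ * (B * (B * P))) := by rw [hP', Matrix.one_mul]
        _ = Matrix.trace (B * (B * P) * Pᵀ) := by rw [Matrix.trace_mul_comm]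
        _ = Matrix.trace (B * (B * (P * Pᵀ))) := by simp only [Matrix.mul_assoc]
        _ = Matrix.trace (B * B) := by rw [hP', Matrix.mul_one]
    have htrAC : Matrix.trace (A * C) = ∑ i, ∑ j, M i j * (lamA i * lamB j) := by
      calc Matrix.trace (A * C)
          = Matrix.trace (VA * (Matrix.diagonal lamA * (VAᵀ * (Pᵀ * (VB *
              (Matrix.diagonal lamB * (VBᵀ * P))))))) := by
            rw [hC, hAdec, hBdec]; simp only [Matrix.mul_assoc]
        _ = Matrix.trace (Matrix.diagonal lamA * (VAᵀ * (Pᵀ * (VB *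
              (Matrix.diagonal lamB * (VBᵀ * (P * VA))))))) := by
            rw [Matrix.trace_mul_comm]; simp only [Matrix.mul_assoc]
        _ = Matrix.trace (Matrix.diagonal lamA * Qᵀ * Matrix.diagonal lamB * Q) := by
            rw [hQ]
            simp only [Matrix.transpose_mul, Matrix.transpose_transpose, Matrix.mul_assoc]
        _ = ∑ i, ∑ j, (Q j i) ^ 2 * (lamA i * lamB j) := trace_dQdQ lamA lamB Q
        _ = ∑ i, ∑ j, M i j * (lamA i * lamB j) := rfl
    have hle : Matrix.trace (A * C) ≤ ∑ i, lamA i * lamB i := by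
      rw [htrAC]; exact ds_sum_le lamA lamB hsortA hsortB M hMds
    have hexp : Matrix.trace ((A - C)ᵀ * (A - C))
        = Matrix.trace (A * A) - 2 * Matrix.trace (A * C) + Matrix.trace (C * C) := by
      have h2 : (A - C)ᵀ = A - C := by rw [Matrix.transpose_sub, hAsym, hCsym]
      rw [h2, Matrix.sub_mul, Matrix.mul_sub, Matrix.mul_sub, Matrix.trace_sub,
        Matrix.trace_sub, Matrix.trace_sub, Matrix.trace_mul_comm C A]
      ring
    have hsum : ∑ i, (lamA i - lamB i) ^ 2
        = ∑ i, lamA i ^ 2 - 2 * ∑ i, lamA i * lamB i + ∑ i, lamB i ^ 2 := by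
      rw [Finset.mul_sum, ← Finset.sum_sub_distrib, ← Finset.sum_add_distrib]
      exact Finset.sum_congr rfl fun i _ => by ring
    rw [hexp, hsum, htrA, htrC]
    linarith
end

section
/- (Hoffman–Wielandt type bound) For real symmetric n×n matrices A, B with decreasingly-sorted eigenvalues λ_A^{(1)} ≥ ... ≥ λ_A^{(n)} and λ_B^{(1)} ≥ ... ≥ λ_B^{(n)}, and any orthogonal matrix P, one has ||A - PᵀBP||_F² ≥ Σᵢ (λ_A^{(i)} - λ_B^{(i)})². -/
open Matrix Finset

lemma ds_bound {n : ℕ} (S : Matrix (Fin n) (Fin n) ℝ) (hS : S ∈ doublyStochastic ℝ (Fin n))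
    (a b : Fin n → ℝ) (ha : ∀ i j : Fin n, i ≤ j → a j ≤ a i)
    (hb : ∀ i j : Fin n, i ≤ j → b j ≤ b i) :
    ∑ i, ∑ j, S i j * (a i * b j) ≤ ∑ i, a i * b i := by
  have hmono : Monovary a b := by
    intro i j hb'
    rcases le_total i j with h | h
    · exact absurd (hb i j h) (not_le.2 hb')
    · exact ha j i h
  obtain ⟨w, hw0, hw1, hwS⟩ := exists_eq_sum_perm_of_mem_doublyStochastic hS
  have hS' : ∀ i j, S i j = ∑ σ : Equiv.Perm (Fin n), w σ * (if σ i = j then 1 else 0) := by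
    intro i j
    rw [← hwS]
    simp [Matrix.sum_apply, PEquiv.toMatrix_apply, Equiv.toPEquiv_apply]
  have key : ∑ i, ∑ j, S i j * (a i * b j)
      = ∑ σ : Equiv.Perm (Fin n), w σ * ∑ i, a i * b (σ i) := by
    have step1 : ∀ i : Fin n, ∑ j, S i j * (a i * b j)
        = ∑ σ : Equiv.Perm (Fin n), w σ * (a i * b (σ i)) := by
      intro i
      simp only [hS', Finset.sum_mul]
      rw [Finset.sum_comm]
      refine Finset.sum_congr rfl fun σ _ => ?_
      simp [mul_ite, ite_mul]
    simp only [step1]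
    rw [Finset.sum_comm]
    simp [Finset.mul_sum]
  rw [key]
  calc ∑ σ : Equiv.Perm (Fin n), w σ * ∑ i, a i * b (σ i)
      ≤ ∑ σ : Equiv.Perm (Fin n), w σ * ∑ i, a i * b i := by
        refine Finset.sum_le_sum fun σ _ => mul_le_mul_of_nonneg_left ?_ (hw0 σ)
        exact hmono.sum_mul_comp_perm_le_sum_mul
    _ = ∑ i, a i * b i := by rw [← Finset.sum_mul, hw1, one_mul]

/-- Hoffman–Wielandt type bound: for real symmetric matrices `A`, `B` with
decreasingly sorted eigenvalues `λ_A`, `λ_B` and any orthogonal `P`,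
`‖A - PᵀBP‖_F² ≥ ∑ᵢ (λ_A⁽ⁱ⁾ - λ_B⁽ⁱ⁾)²`. -/
theorem hoffman_wielandt_bound (n : ℕ) (A B VA VB : Matrix (Fin n) (Fin n) ℝ)
    (lamA lamB : Fin n → ℝ)
    (hVA : VAᵀ * VA = 1) (hVA' : VA * VAᵀ = 1)
    (hVB : VBᵀ * VB = 1) (hVB' : VB * VBᵀ = 1)
    (hAdec : A = VA * Matrix.diagonal lamA * VAᵀ)
    (hBdec : B = VB * Matrix.diagonal lamB * VBᵀ)
    (hsortA : ∀ i j : Fin n, i ≤ j → lamA j ≤ lamA i)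
    (hsortB : ∀ i j : Fin n, i ≤ j → lamB j ≤ lamB i)
    (P : Matrix (Fin n) (Fin n) ℝ) (hP : Pᵀ * P = 1) :
    (∑ i, (lamA i - lamB i) ^ 2) ≤
      Matrix.trace ((A - Pᵀ * B * P)ᵀ * (A - Pᵀ * B * P)) := by
  have hP' : P * Pᵀ = 1 := mul_eq_one_comm.mp hP
  have hAsymm : Aᵀ = A := by
    rw [hAdec]
    simp [Matrix.transpose_mul, Matrix.diagonal_transpose, Matrix.mul_assoc]
  have hBsymm : Bᵀ = B := by
    rw [hBdec]
    simp [Matrix.transpose_mul, Matrix.diagonal_transpose, Matrix.mul_assoc]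
  have hMsymm : (Pᵀ * B * P)ᵀ = Pᵀ * B * P := by
    simp [Matrix.transpose_mul, hBsymm, Matrix.mul_assoc]
  have hAA : Matrix.trace (A * A) = ∑ i, lamA i ^ 2 := by
    rw [hAdec]
    rw [show VA * Matrix.diagonal lamA * VAᵀ * (VA * Matrix.diagonal lamA * VAᵀ)
        = VA * ((Matrix.diagonal lamA * (VAᵀ * VA) * Matrix.diagonal lamA) * VAᵀ) by
      simp [Matrix.mul_assoc]]
    rw [hVA, Matrix.mul_one, Matrix.trace_mul_comm, Matrix.mul_assoc, hVA, Matrix.mul_one]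
    simp [Matrix.diagonal_mul_diagonal, Matrix.trace_diagonal, sq]
  have hBB : Matrix.trace ((Pᵀ * B * P) * (Pᵀ * B * P)) = ∑ i, lamB i ^ 2 := by
    have hMM : Matrix.trace ((Pᵀ * B * P) * (Pᵀ * B * P)) = Matrix.trace (B * B) := by
      rw [show Pᵀ * B * P * (Pᵀ * B * P) = Pᵀ * ((B * (P * Pᵀ) * B) * P) by
        simp [Matrix.mul_assoc]]
      rw [hP', Matrix.mul_one, Matrix.trace_mul_comm, Matrix.mul_assoc, hP', Matrix.mul_one]
    rw [hMM, hBdec]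
    rw [show VB * Matrix.diagonal lamB * VBᵀ * (VB * Matrix.diagonal lamB * VBᵀ)
        = VB * ((Matrix.diagonal lamB * (VBᵀ * VB) * Matrix.diagonal lamB) * VBᵀ) by
      simp [Matrix.mul_assoc]]
    rw [hVB, Matrix.mul_one, Matrix.trace_mul_comm, Matrix.mul_assoc, hVB, Matrix.mul_one]
    simp [Matrix.diagonal_mul_diagonal, Matrix.trace_diagonal, sq]
  set W : Matrix (Fin n) (Fin n) ℝ := VAᵀ * Pᵀ * VB with hWdef
  have hWt : Wᵀ = VBᵀ * P * VA := by
    simp [hWdef, Matrix.transpose_mul, Matrix.mul_assoc]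
  have hcross : Matrix.trace (A * (Pᵀ * B * P))
      = ∑ i, ∑ j, (W i j) ^ 2 * (lamA i * lamB j) := by
    have h1 : A * (Pᵀ * B * P)
        = VA * (Matrix.diagonal lamA * W * Matrix.diagonal lamB * Wᵀ) * VAᵀ := by
      rw [hAdec, hBdec, hWdef, hWt]
      simp only [Matrix.mul_assoc]
      rw [hVA', Matrix.mul_one]
    rw [h1, Matrix.trace_mul_comm, ← Matrix.mul_assoc, hVA, Matrix.one_mul]
    have h2 : ∀ i, (Matrix.diagonal lamA * W * Matrix.diagonal lamB * Wᵀ) i i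
        = ∑ j, W i j ^ 2 * (lamA i * lamB j) := by
      intro i
      rw [Matrix.mul_apply]
      refine Finset.sum_congr rfl fun j _ => ?_
      rw [Matrix.mul_diagonal, Matrix.diagonal_mul, Matrix.transpose_apply]
      ring
    simp only [Matrix.trace, Matrix.diag_apply, h2]
  have hWWt : W * Wᵀ = 1 := by
    have h : W * Wᵀ = VAᵀ * ((Pᵀ * ((VB * VBᵀ) * P)) * VA) := by
      rw [hWdef, hWt]; simp [Matrix.mul_assoc]
    rw [h, hVB', Matrix.one_mul, hP, Matrix.one_mul, hVA]
  have hWtW : Wᵀ * W = 1 := mul_eq_one_comm.mp hWWt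
  have hrow : ∀ i, ∑ j, W i j ^ 2 = 1 := by
    intro i
    have h := Matrix.ext_iff.2 hWWt i i
    rw [Matrix.mul_apply] at h
    simp only [Matrix.transpose_apply, Matrix.one_apply_eq] at h
    rw [← h]
    exact Finset.sum_congr rfl fun j _ => (sq (W i j)).symm ▸ by ring
  have hcol : ∀ j, ∑ i, W i j ^ 2 = 1 := by
    intro j
    have h := Matrix.ext_iff.2 hWtW j j
    rw [Matrix.mul_apply] at h
    simp only [Matrix.transpose_apply, Matrix.one_apply_eq] at h
    rw [← h]
    exact Finset.sum_congr rfl fun i _ => by ring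
  have hSmem : (Matrix.of fun i j => W i j ^ 2) ∈ doublyStochastic ℝ (Fin n) := by
    rw [mem_doublyStochastic_iff_sum]
    exact ⟨fun i j => sq_nonneg _, hrow, hcol⟩
  have hds := ds_bound _ hSmem lamA lamB hsortA hsortB
  simp only [Matrix.of_apply] at hds
  have expand1 : Matrix.trace ((A - Pᵀ * B * P)ᵀ * (A - Pᵀ * B * P))
      = Matrix.trace (A * A) - 2 * Matrix.trace (A * (Pᵀ * B * P))
        + Matrix.trace ((Pᵀ * B * P) * (Pᵀ * B * P)) := by
    rw [Matrix.transpose_sub, hAsymm, hMsymm, Matrix.sub_mul, Matrix.mul_sub, Matrix.mul_sub,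
      Matrix.trace_sub, Matrix.trace_sub, Matrix.trace_sub,
      Matrix.trace_mul_comm (Pᵀ * B * P) A]
    ring
  have expand2 : ∑ i, (lamA i - lamB i) ^ 2
      = (∑ i, lamA i ^ 2) + (∑ i, lamB i ^ 2) - 2 * ∑ i, lamA i * lamB i := by
    rw [Finset.mul_sum, ← Finset.sum_add_distrib, ← Finset.sum_sub_distrib]
    exact Finset.sum_congr rfl fun i _ => by ring
  rw [expand1, hAA, hBB, hcross, expand2]
  linarith [hds]
end
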